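/- arXiv:alg-geom/9202009 — 2 statements merged into one kernel-verified Lean document; each statement's English description precedes it below -/
import Mathlib

section
/- Let R be a ring and let (M_i)_{i∈ℕ} be a projective system of Artinian R-modules with transition maps f^j_i : M_j → M_i (for j ≥ i). If for every i the map f^i_0 : M_i → M_0 is nonzero, then the projective limit lim_{←i} M_i is nonzero. -/
private lemma exists_seq_aux {α : ℕ → Type*} (P : ∀ i, α i → Prop)
    (r : ∀ i, α i → α (i+1) → Prop) (x0 : α 0) (h0 : P 0 x0)
    (step : ∀ i x, P i x → ∃ y, P (i+1) y ∧ r i x y) :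
    ∃ x : ∀ i, α i, x 0 = x0 ∧ (∀ i, P i (x i)) ∧ ∀ i, r i (x i) (x (i+1)) := by
  classical
  let g : ∀ i, {a : α i // P i a} :=
    fun i => Nat.rec ⟨x0, h0⟩
      (fun i p => ⟨Classical.choose (step i p.1 p.2),
        (Classical.choose_spec (step i p.1 p.2)).1⟩) i
  refine ⟨fun i => (g i).1, rfl, fun i => (g i).2, fun i => ?_⟩
  exact (Classical.choose_spec (step i (g i).1 (g i).2)).2

/-- Let `R` be a ring and `(M i)_{i ∈ ℕ}` a projective system of
Artinian `R`-modules with transition maps `f i j : M j →ₗ[R] M i` for `i ≤ j`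
(satisfying `f i i = id` and `f i j ∘ f j k = f i k`).  If for every `i` the map
`f 0 i : M i → M 0` is nonzero, then the projective limit `lim_{←i} M i`
(realized as the set of compatible families in `∀ i, M i`) is nonzero. -/
theorem projective_limit_of_artinian_nonzero
    (R : Type*) [Ring R] (M : ℕ → Type*)
    [∀ i, AddCommGroup (M i)] [∀ i, Module R (M i)] [∀ i, IsArtinian R (M i)]
    (f : ∀ i j : ℕ, i ≤ j → (M j →ₗ[R] M i))
    (hid : ∀ (i : ℕ) (x : M i), f i i le_rfl x = x)
    (hcomp : ∀ (i j k : ℕ) (hij : i ≤ j) (hjk : j ≤ k) (x : M k),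
      f i j hij (f j k hjk x) = f i k (hij.trans hjk) x)
    (hnz : ∀ i : ℕ, f 0 i (Nat.zero_le i) ≠ 0) :
    ∃ x : ∀ i, M i, (∀ (i j : ℕ) (h : i ≤ j), f i j h (x j) = x i) ∧ x ≠ 0 := by
  classical
  -- ranges are antitone
  have hrange : ∀ (i j k : ℕ) (hij : i ≤ j) (hjk : j ≤ k),
      LinearMap.range (f i k (hij.trans hjk)) ≤ LinearMap.range (f i j hij) := by
    rintro i j k hij hjk _ ⟨z, rfl⟩
    exact ⟨f j k hjk z, hcomp i j k hij hjk z⟩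
  -- stabilization for each i
  have hstab : ∀ i : ℕ, ∃ N : ℕ, ∀ m, N ≤ m →
      LinearMap.range (f i (i + m) (Nat.le_add_right i m)) =
      LinearMap.range (f i (i + N) (Nat.le_add_right i N)) := by
    intro i
    have := IsArtinian.monotone_stabilizes (R := R) (M := M i)
      ⟨fun n => OrderDual.toDual (LinearMap.range (f i (i + n) (Nat.le_add_right i n))),
       by
        intro n m hnm
        exact hrange i (i + n) (i + m) (Nat.le_add_right i n) (by omega)⟩
    obtain ⟨N, hN⟩ := this
    exact ⟨N, fun m hm => congrArg OrderDual.ofDual (hN m hm).symm⟩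
  choose N hN using hstab
  -- stable image
  set S : ∀ i, Submodule R (M i) :=
    fun i => LinearMap.range (f i (i + N i) (Nat.le_add_right i (N i))) with hS
  -- S i = range (f i j) for any j ≥ i + N i
  have hSrange : ∀ (i j : ℕ) (h : i ≤ j), i + N i ≤ j → S i = LinearMap.range (f i j h) := by
    intro i j h hj
    obtain ⟨d, rfl⟩ := Nat.exists_eq_add_of_le h
    exact (hN i d (by omega)).symm
  -- S 0 ≠ ⊥
  have hS0 : S 0 ≠ ⊥ := by
    rw [hS]
    intro hbot
    have := LinearMap.range_eq_bot.mp hbot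
    have h0 : f 0 (0 + N 0) (Nat.le_add_right 0 (N 0)) = f 0 (0 + N 0) (Nat.zero_le _) := rfl
    exact hnz (0 + N 0) (h0 ▸ this)
  -- surjectivity of f i (i+1) : S (i+1) → S i
  have hsurj : ∀ (i : ℕ) (y : M i), y ∈ S i →
      ∃ w : M (i+1), w ∈ S (i+1) ∧ f i (i+1) (Nat.le_succ i) w = y := by
    intro i y hy
    set k := max (i + N i) (i + 1 + N (i+1)) with hk
    have h1 : i ≤ k := by omega
    have h2 : i + 1 ≤ k := by omega
    rw [hSrange i k h1 (by omega)] at hy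
    obtain ⟨z, hz⟩ := hy
    refine ⟨f (i+1) k h2 z, ?_, ?_⟩
    · rw [hSrange (i+1) k h2 (by omega)]
      exact ⟨z, rfl⟩
    · rw [hcomp i (i+1) k (Nat.le_succ i) h2 z]
      exact hz
  -- pick nonzero element of S 0
  obtain ⟨x0, hx0S, hx0⟩ : ∃ x0 : M 0, x0 ∈ S 0 ∧ x0 ≠ 0 := by
    by_contra h
    push_neg at h
    exact hS0 ((Submodule.eq_bot_iff _).mpr fun y hy => by
      by_contra hy0; exact hy0 (by by_contra hy0'; exact hy0' (h y hy)))
  -- build the sequence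
  obtain ⟨x, hx_zero, _, hxstep⟩ := exists_seq_aux (fun i (v : M i) => v ∈ S i)
    (fun i v w => f i (i+1) (Nat.le_succ i) w = v) x0 hx0S hsurj
  refine ⟨x, ?_, ?_⟩
  · intro i j h
    obtain ⟨d, rfl⟩ := Nat.exists_eq_add_of_le h
    induction d with
    | zero => simpa using hid i (x i)
    | succ d ih =>
      have h1 : i ≤ i + d := Nat.le_add_right i d
      have h2 : i + d ≤ i + d + 1 := Nat.le_succ _
      have := hcomp i (i + d) (i + d + 1) h1 h2 (x (i + d + 1))
      rw [hxstep (i + d)] at this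
      exact this.symm.trans (ih h1)
  · intro h0
    apply hx0
    rw [← hx_zero, h0]
    rfl
end

section
/- Let R be a ring and let (M_i)_{i∈ℕ} be a projective system of Artinian R-modules with transition maps f^j_i : M_j → M_i (for j ≥ i). For each i, set M_i^stab = ⋂_{j≥i} f^j_i(M_j). Then for every i the transition map f^{i+1}_i carries M_{i+1}^stab onto M_i^stab, i.e. f^{i+1}_i(M_{i+1}^stab) = M_i^stab. -/
/-- For a projective system `(M i)_{i ∈ ℕ}` of Artinian `R`-modules
with transition maps `f i j : M j →ₗ[R] M i` (`i ≤ j`), set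
`Mᵢ^stab = ⋂_{j ≥ i} f i j (M j)`.  Then for every `i` the transition map
`f i (i+1)` carries `M_{i+1}^stab` onto `Mᵢ^stab`. -/
theorem stable_submodules_surjective_system
    (R : Type*) [Ring R] (M : ℕ → Type*)
    [∀ i, AddCommGroup (M i)] [∀ i, Module R (M i)] [∀ i, IsArtinian R (M i)]
    (f : ∀ i j : ℕ, i ≤ j → (M j →ₗ[R] M i))
    (hid : ∀ (i : ℕ) (x : M i), f i i le_rfl x = x)
    (hcomp : ∀ (i j k : ℕ) (hij : i ≤ j) (hjk : j ≤ k) (x : M k),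
      f i j hij (f j k hjk x) = f i k (hij.trans hjk) x)
    (i : ℕ) :
    Submodule.map (f i (i + 1) (Nat.le_succ i))
        (⨅ (j : ℕ) (h : i + 1 ≤ j), LinearMap.range (f (i + 1) j h)) =
      ⨅ (j : ℕ) (h : i ≤ j), LinearMap.range (f i j h) := by
  -- ranges are antitone
  have hmono : ∀ (a j k : ℕ) (haj : a ≤ j) (hjk : j ≤ k),
      LinearMap.range (f a k (haj.trans hjk)) ≤ LinearMap.range (f a j haj) := by
    rintro a j k haj hjk _ ⟨x, rfl⟩
    exact ⟨f j k hjk x, hcomp a j k haj hjk x⟩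
  have hmono' : ∀ (a j k : ℕ) (haj : a ≤ j) (hjk : j ≤ k) (hak : a ≤ k),
      LinearMap.range (f a k hak) ≤ LinearMap.range (f a j haj) := by
    intro a j k haj hjk hak
    exact hmono a j k haj hjk
  have hcongr : ∀ (a x y : ℕ) (_ : x = y) (hax : a ≤ x) (hay : a ≤ y),
      LinearMap.range (f a x hax) = LinearMap.range (f a y hay) := by
    rintro a x y rfl hax hay; rfl
  -- key stabilization lemma
  have key : ∀ a : ℕ, ∃ N, ∃ haN : a ≤ N, ∀ j, ∀ hNj : N ≤ j,
      (⨅ (j : ℕ) (h : a ≤ j), LinearMap.range (f a j h)) =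
        LinearMap.range (f a j (haN.trans hNj)) := by
    intro a
    set g : ℕ →o (Submodule R (M a))ᵒᵈ :=
      ⟨fun n => LinearMap.range (f a (a + n) (Nat.le_add_right a n)), by
        intro n m hnm
        exact hmono' a (a + n) (a + m) (Nat.le_add_right a n) (by omega) _⟩ with hg
    obtain ⟨n, hn⟩ := IsArtinian.monotone_stabilizes g
    have hgr : ∀ j (hj : a + n ≤ j),
        LinearMap.range (f a (a + n) (Nat.le_add_right a n)) =
          LinearMap.range (f a j ((Nat.le_add_right a n).trans hj)) := by
      intro j hj
      have h1 : g n = g (j - a) := hn (j - a) (by omega)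
      simp only [hg, OrderHom.coe_mk] at h1
      rw [show (LinearMap.range (f a (a + n) (Nat.le_add_right a n)) =
          LinearMap.range (f a (a + (j - a)) (Nat.le_add_right a (j - a)))) from h1]
      exact hcongr a _ _ (by omega) _ _
    refine ⟨a + n, Nat.le_add_right a n, fun j hNj => ?_⟩
    apply le_antisymm
    · exact iInf₂_le j _
    · refine le_iInf fun k => le_iInf fun hak => ?_
      rcases le_or_gt k j with hkj | hjk
      · exact hmono' a k j hak hkj _
      · rw [← hgr j hNj, hgr k (by omega)]
  obtain ⟨N1, hN1, H1⟩ := key (i + 1)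
  obtain ⟨N2, hN2, H2⟩ := key i
  set N := max N1 N2 with hN
  have h1 : N1 ≤ N := le_max_left _ _
  have h2 : N2 ≤ N := le_max_right _ _
  have hiN : i ≤ N := hN2.trans h2
  have hi1N : i + 1 ≤ N := hN1.trans h1
  rw [H1 N h1, H2 N h2]
  rw [← LinearMap.range_comp]
  congr 1
  ext x
  exact hcomp i (i + 1) N (Nat.le_succ i) (hN1.trans h1) x
end
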